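/- Let f : ℝⁿ → ℝ be real analytic with f(0) = 0 and ∇f(0) = 0, and suppose (Łojasiewicz) there exist c > 0, γ ∈ [1/2, 1), ε > 0 with ‖∇f(x)‖ ≥ c|f(x)|^γ for ‖x‖ < ε. If u : [0,∞) → ℝⁿ is a trajectory of u' = -∇f(u) that remains in the ball of radius ε and f(u(t)) > 0 for all t, then u has finite length: ∫₀^∞ ‖u'(t)‖ dt ≤ (1/(c(1-γ))) f(u(0))^{1-γ}, and hence u(t) converges as t → ∞. -/

import Mathlib

/-!
Along the flow, `d/dt f(u t) = -‖∇f(u t)‖²`. Hence `Φ t = f(u t)^(1-γ) / (c(1-γ))` has derivative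
`-‖∇f(u t)‖² / (c f(u t)^γ)`, which the gradient inequality bounds above by `-‖∇f(u t)‖ = -‖u' t‖`.
Integrating, the length of `u` on `[0, T]` is at most `Φ 0 - Φ T ≤ Φ 0`, and a curve with
integrable velocity converges.
-/

open Filter MeasureTheory Set

section Gradient

variable {E : Type*} [NormedAddCommGroup E] [InnerProductSpace ℝ E] [CompleteSpace E]

theorem ContDiff.continuous_gradient {f : E → ℝ} (hf : ContDiff ℝ 1 f) :
    Continuous (gradient f) :=
  (InnerProductSpace.toDual ℝ E).symm.continuous.comp (hf.continuous_fderiv one_ne_zero)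

theorem hasDerivAt_comp_gradientFlow {f : E → ℝ} {u : ℝ → E} {t : ℝ}
    (hf : DifferentiableAt ℝ f (u t)) (hu : HasDerivAt u (-gradient f (u t)) t) :
    HasDerivAt (fun s => f (u s)) (-‖gradient f (u t)‖ ^ 2) t := by
  refine (hf.hasFDerivAt.comp_hasDerivAt t hu).congr_deriv ?_
  rw [← inner_gradient_left, inner_neg_right, real_inner_self_eq_norm_sq]

end Gradient

theorem hasDerivAt_rpow_one_sub_of_hasDerivAt_neg_sq {φ : ℝ → ℝ} {c γ G t : ℝ}
    (hφ : HasDerivAt φ (-G ^ 2) t) (hpos : 0 < φ t) (hc : 0 < c) (hγ : γ < 1) :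
    HasDerivAt (fun s => 1 / (c * (1 - γ)) * φ s ^ (1 - γ)) (-(G ^ 2 / (c * φ t ^ γ))) t := by
  refine ((hφ.rpow_const (Or.inl hpos.ne')).const_mul (1 / (c * (1 - γ)))).congr_deriv ?_
  rw [sub_sub_cancel_left, Real.rpow_neg hpos.le]
  field_simp [(sub_pos.2 hγ).ne']

theorem le_sq_div_of_le {a G : ℝ} (ha : 0 < a) (h : a ≤ G) : G ≤ G ^ 2 / a := by
  rw [le_div_iff₀ ha, sq]
  exact mul_le_mul_of_nonneg_left h (ha.le.trans h)

section ImproperIntegral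

variable {g Φ Φ' : ℝ → ℝ} {a : ℝ}

theorem intervalIntegral_le_of_le_neg_deriv (hg : ContinuousOn g (Ici a))
    (hΦ0 : ∀ t ∈ Ici a, 0 ≤ Φ t) (hΦ : ∀ t ∈ Ici a, HasDerivAt Φ (Φ' t) t)
    (hle : ∀ t ∈ Ici a, Φ' t ≤ -g t) {b : ℝ} (hab : a ≤ b) :
    ∫ t in a..b, g t ≤ Φ a := by
  have hsub : Icc a b ⊆ Ici a := Icc_subset_Ici_self
  have hFTC : ∫ t in a..b, g t ≤ -Φ b - -Φ a :=
    intervalIntegral.integral_le_sub_of_hasDeriv_right_of_le hab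
      (fun t ht => (hΦ t (hsub ht)).continuousAt.continuousWithinAt.neg)
      (fun t ht => (hΦ t (hsub (Ioo_subset_Icc_self ht))).neg.hasDerivWithinAt)
      (hg.mono hsub).integrableOn_Icc
      (fun t ht => le_neg_of_le_neg (hle t (hsub (Ioo_subset_Icc_self ht))))
  linarith [hΦ0 b (hsub (right_mem_Icc.2 hab))]

theorem integrableOn_Ioi_of_le_neg_deriv (hg : ContinuousOn g (Ici a))
    (hg0 : ∀ t ∈ Ici a, 0 ≤ g t) (hΦ0 : ∀ t ∈ Ici a, 0 ≤ Φ t)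
    (hΦ : ∀ t ∈ Ici a, HasDerivAt Φ (Φ' t) t) (hle : ∀ t ∈ Ici a, Φ' t ≤ -g t) :
    IntegrableOn g (Ioi a) := by
  refine integrableOn_Ioi_of_intervalIntegral_norm_bounded (Φ a) a
    (fun i => ((hg.mono Icc_subset_Ici_self).integrableOn_Icc).mono_set Ioc_subset_Icc_self)
    tendsto_id ?_
  filter_upwards [eventually_ge_atTop a] with b hab
  rw [intervalIntegral.integral_congr fun t ht => ?_]
  · exact intervalIntegral_le_of_le_neg_deriv hg hΦ0 hΦ hle hab
  · rw [id, uIcc_of_le hab] at ht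
    exact Real.norm_of_nonneg (hg0 t ht.1)

theorem integral_Ioi_le_of_le_neg_deriv (hg : ContinuousOn g (Ici a))
    (hg0 : ∀ t ∈ Ici a, 0 ≤ g t) (hΦ0 : ∀ t ∈ Ici a, 0 ≤ Φ t)
    (hΦ : ∀ t ∈ Ici a, HasDerivAt Φ (Φ' t) t) (hle : ∀ t ∈ Ici a, Φ' t ≤ -g t) :
    ∫ t in Ioi a, g t ≤ Φ a :=
  le_of_tendsto (intervalIntegral_tendsto_integral_Ioi a
      (integrableOn_Ioi_of_le_neg_deriv hg hg0 hΦ0 hΦ hle) tendsto_id)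
    (eventually_ge_atTop a |>.mono fun _ hab =>
      intervalIntegral_le_of_le_neg_deriv hg hΦ0 hΦ hle hab)

end ImproperIntegral

theorem stmt_18_general (n : ℕ) (f : EuclideanSpace ℝ (Fin n) → ℝ) (hf : ContDiff ℝ 1 f)
    (c γ ε : ℝ) (hc : 0 < c) (hγ : γ ∈ Set.Ico (1 / 2 : ℝ) 1)
    (hloj : ∀ x : EuclideanSpace ℝ (Fin n), ‖x‖ < ε →
      c * |f x| ^ γ ≤ ‖gradient f x‖)
    (u : ℝ → EuclideanSpace ℝ (Fin n))
    (hu : ∀ t ∈ Set.Ici (0 : ℝ), HasDerivAt u (-gradient f (u t)) t)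
    (hball : ∀ t ∈ Set.Ici (0 : ℝ), ‖u t‖ < ε)
    (hpos : ∀ t ∈ Set.Ici (0 : ℝ), 0 < f (u t)) :
    MeasureTheory.IntegrableOn (fun t => ‖gradient f (u t)‖) (Set.Ioi 0) ∧
      (∫ t in Set.Ioi (0 : ℝ), ‖gradient f (u t)‖)
        ≤ (1 / (c * (1 - γ))) * f (u 0) ^ (1 - γ) ∧
      ∃ L, Tendsto u atTop (nhds L) := by
  have hv : ContinuousOn (fun t => -gradient f (u t)) (Ici 0) :=
    (hf.continuous_gradient.comp_continuousOn
      fun t ht => (hu t ht).continuousAt.continuousWithinAt).neg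
  have hg : ContinuousOn (fun t => ‖gradient f (u t)‖) (Ici 0) := by
    simpa only [norm_neg] using hv.norm
  have hΦ : ∀ t ∈ Ici (0 : ℝ), HasDerivAt (fun s => 1 / (c * (1 - γ)) * f (u s) ^ (1 - γ))
      (-(‖gradient f (u t)‖ ^ 2 / (c * f (u t) ^ γ))) t := fun t ht =>
    hasDerivAt_rpow_one_sub_of_hasDerivAt_neg_sq (hasDerivAt_comp_gradientFlow
      ((hf.differentiable one_ne_zero) (u t)) (hu t ht)) (hpos t ht) hc hγ.2
  have hle : ∀ t ∈ Ici (0 : ℝ),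
      -(‖gradient f (u t)‖ ^ 2 / (c * f (u t) ^ γ)) ≤ -‖gradient f (u t)‖ := fun t ht =>
    neg_le_neg <| le_sq_div_of_le (mul_pos hc (Real.rpow_pos_of_pos (hpos t ht) γ))
      (by simpa only [abs_of_pos (hpos t ht)] using hloj (u t) (hball t ht))
  have hΦ0 : ∀ t ∈ Ici (0 : ℝ), 0 ≤ 1 / (c * (1 - γ)) * f (u t) ^ (1 - γ) := fun t ht => by
    have := hpos t ht
    have := sub_pos.2 hγ.2
    positivity
  have hg0 : ∀ t ∈ Ici (0 : ℝ), 0 ≤ ‖gradient f (u t)‖ := fun _ _ => norm_nonneg _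
  have hint := integrableOn_Ioi_of_le_neg_deriv hg hg0 hΦ0 hΦ hle
  refine ⟨hint, integral_Ioi_le_of_le_neg_deriv hg hg0 hΦ0 hΦ hle, limUnder atTop u, ?_⟩
  refine tendsto_limUnder_of_hasDerivAt_of_integrableOn_Ioi
    (fun t ht => hu t (Ioi_subset_Ici_self ht)) ?_
  refine (integrable_norm_iff ?_).1 ?_
  · exact (hv.mono Ioi_subset_Ici_self).aestronglyMeasurable measurableSet_Ioi
  · simp only [norm_neg]
    exact hint

/-- Łojasiewicz convergence for gradient flow: if `f : ℝⁿ → ℝ` is `C¹`, satisfies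
the gradient inequality `‖∇f(x)‖ ≥ c|f(x)|^γ` on the ε-ball, and `u` is a
trajectory of `u' = -∇f(u)` staying in the ε-ball with `f(u(t)) > 0`, then `u`
has finite length bounded by `(1/(c(1−γ)))·f(u 0)^(1−γ)` and converges. -/
theorem stmt_18 (n : ℕ) (f : EuclideanSpace ℝ (Fin n) → ℝ) (hf : ContDiff ℝ 1 f)
    (c γ ε : ℝ) (hc : 0 < c) (hγ : γ ∈ Set.Ico (1 / 2 : ℝ) 1) (hε : 0 < ε)
    (hloj : ∀ x : EuclideanSpace ℝ (Fin n), ‖x‖ < ε →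
      c * |f x| ^ γ ≤ ‖gradient f x‖)
    (u : ℝ → EuclideanSpace ℝ (Fin n))
    (hu : ∀ t ∈ Set.Ici (0 : ℝ), HasDerivAt u (-gradient f (u t)) t)
    (hball : ∀ t ∈ Set.Ici (0 : ℝ), ‖u t‖ < ε)
    (hpos : ∀ t ∈ Set.Ici (0 : ℝ), 0 < f (u t)) :
    MeasureTheory.IntegrableOn (fun t => ‖gradient f (u t)‖) (Set.Ioi 0) ∧
      (∫ t in Set.Ioi (0 : ℝ), ‖gradient f (u t)‖)
        ≤ (1 / (c * (1 - γ))) * f (u 0) ^ (1 - γ) ∧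
      ∃ L, Tendsto u atTop (nhds L) :=
  stmt_18_general n f hf c γ ε hc hγ hloj u hu hball hpos
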